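/- Let E be a horizontal self-affine carpet with the associated symbolic notation, let Q = [h,h']×[v,v'] be the smallest closed axis-parallel rectangle containing E, and Q_𝚓 = φ_𝚓(Q) for 𝚓 ∈ Σ_*. Then for every K ∈ ℕ there exists t_K > 0 such that for any 0 < t < t_K and any 𝚒 ∈ Σ, the closed ball B(π(𝚒),t) intersects at most one vertical line that contains a horizontal ending of some rectangle Q_{𝚒|_t 𝚓} with |𝚓| = K; that is, there is at most one a ∈ ℝ such that the line {a}×ℝ meets B(π(𝚒),t) and contains φ_{𝚒|_t 𝚓}({h}×[v,v']) or φ_{𝚒|_t 𝚓}({h'}×[v,v']) for some 𝚓 ∈ Σ_K. -/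

import Mathlib

open Set Metric Filter Topology

noncomputable section

/-- The Euclidean plane ℝ². -/
abbrev E2 := EuclideanSpace ℝ (Fin 2)

/-- The vertical line {a} × ℝ in ℝ². -/
def vline (a : ℝ) : Set E2 := {x | x 0 = a}

/-- A horizontal self-affine carpet: an IFS of invertible diagonal affine maps on ℝ²
satisfying (H1), together with its attractor `E` of diameter 1, satisfying the strong
separation condition and the vertical line condition (H2). -/
structure HorizontalCarpet where
  N : ℕ
  hN : 2 ≤ N
  a1 : Fin N → ℝ
  a2 : Fin N → ℝ
  b1 : Fin N → ℝ
  b2 : Fin N → ℝ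
  φ : Fin N → E2 → E2
  hφ : ∀ i x, φ i x = ![a1 i * x 0 + b1 i, a2 i * x 1 + b2 i]
  hH1 : ∀ i, 0 < a2 i ∧ a2 i < a1 i ∧ a1 i < 1
  E : Set E2
  hne : E.Nonempty
  hcomp : IsCompact E
  hinv : E = ⋃ i, φ i '' E
  hdiam : Metric.diam E = 1
  hssc : ∀ i j, i ≠ j → Disjoint (φ i '' E) (φ j '' E)
  hH2 : ∀ a : ℝ, (vline a ∩ convexHull ℝ E).Nonempty →
    ∃ i j : Fin N, i ≠ j ∧ (vline a ∩ φ i '' (convexHull ℝ E)).Nonempty ∧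
      (vline a ∩ φ j '' (convexHull ℝ E)).Nonempty

/-- `η : [0,∞) → [0,∞)` is a homeomorphism (expressed for a function `η : ℝ → ℝ`). -/
def IsHomeoOfIci (η : ℝ → ℝ) : Prop :=
  ∃ e : (Set.Ici (0:ℝ)) ≃ₜ (Set.Ici (0:ℝ)), ∀ x : Set.Ici (0:ℝ), (e x : ℝ) = η x

/-- `f` is η-quasisymmetric. -/
def IsQuasisymmetric {X Y : Type*} [MetricSpace X] [MetricSpace Y] (η : ℝ → ℝ)
    (f : X → Y) : Prop :=
  ∀ x y z : X, x ≠ z →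
    dist (f x) (f y) / dist (f x) (f z) ≤ η (dist x y / dist x z)

/-- The composition `φ_{i₁} ∘ ⋯ ∘ φ_{iₙ}` associated to a finite word. -/
def wordMap (c : HorizontalCarpet) : List (Fin c.N) → E2 → E2
  | [] => id
  | i :: l => c.φ i ∘ wordMap c l

/-- The first `n` entries `𝚒|_n` of an infinite word `𝚒 ∈ Σ`, as a list. -/
def wordPre (c : HorizontalCarpet) (i : ℕ → Fin c.N) (n : ℕ) : List (Fin c.N) :=
  (List.range n).map i

/-- `α₂(𝚒)`, the product of the vertical contraction ratios along a word. -/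
def prodA2 (c : HorizontalCarpet) (l : List (Fin c.N)) : ℝ := (l.map c.a2).prod

/-- `ᾱ = max_i α₁(i)`. -/
def alphaBar (c : HorizontalCarpet) : ℝ := sSup (Set.range c.a1)

/-- `α̲ = min_i α₂(i)`. -/
def alphaLow (c : HorizontalCarpet) : ℝ := sInf (Set.range c.a2)

/-- `δ = min_{i ≠ j} dist(φ_i(E), φ_j(E))`. -/
def sscGap (c : HorizontalCarpet) : ℝ :=
  sInf {d : ℝ | ∃ i j : Fin c.N, i ≠ j ∧
    ∃ x ∈ c.φ i '' c.E, ∃ y ∈ c.φ j '' c.E, d = dist x y}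

/-- `n(𝚒,t)`: the largest `n` such that `B(π(𝚒),t)` meets no level-`n` cylinder other
than `E_{𝚒|_n}`; here `p = π(𝚒)`. -/
def nSep (c : HorizontalCarpet) (i : ℕ → Fin c.N) (p : E2) (t : ℝ) : ℕ :=
  sSup {n : ℕ | ∀ l : List (Fin c.N), l.length = n → l ≠ wordPre c i n →
    wordMap c l '' c.E ∩ closedBall p t = ∅}

/-- `n^*(t) = min{n : ᾱ^n < t}`. -/
def nUp (c : HorizontalCarpet) (t : ℝ) : ℕ := sInf {n : ℕ | alphaBar c ^ n < t}

/-- `n_*(t) = max{n : α̲^n δ > t}`. -/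
def nLow (c : HorizontalCarpet) (t : ℝ) : ℕ :=
  sSup {n : ℕ | t < alphaLow c ^ n * sscGap c}
/-- The left edge `h` of the smallest closed axis-parallel rectangle `Q = [h,h']×[v,v']`
containing `E`. -/
def hLeft (c : HorizontalCarpet) : ℝ := sInf ((fun x : E2 => x 0) '' c.E)

/-- The right edge `h'` of `Q`. -/
def hRight (c : HorizontalCarpet) : ℝ := sSup ((fun x : E2 => x 0) '' c.E)

/-- The bottom edge `v` of `Q`. -/
def vBot (c : HorizontalCarpet) : ℝ := sInf ((fun x : E2 => x 1) '' c.E)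

/-- The top edge `v'` of `Q`. -/
def vTop (c : HorizontalCarpet) : ℝ := sSup ((fun x : E2 => x 1) '' c.E)

/-- The vertical line `{a} × ℝ` meets `B(p,t)` and contains a horizontal ending of some
rectangle `Q_{𝚒|_t 𝚓}` with `|𝚓| = K`. -/
def EndingLine (c : HorizontalCarpet) (i : ℕ → Fin c.N) (p : E2) (t : ℝ) (K : ℕ)
    (a : ℝ) : Prop :=
  (vline a ∩ closedBall p t).Nonempty ∧
  ∃ l : List (Fin c.N), l.length = K ∧
    (wordMap c (wordPre c i (nSep c i p t) ++ l) ''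
        {x : E2 | x 0 = hLeft c ∧ x 1 ∈ Set.Icc (vBot c) (vTop c)} ⊆ vline a ∨
     wordMap c (wordPre c i (nSep c i p t) ++ l) ''
        {x : E2 | x 0 = hRight c ∧ x 1 ∈ Set.Icc (vBot c) (vTop c)} ⊆ vline a)

/-!
The ball `B(π(𝚒), t)` and the cylinder `E_{𝚒|_t}` live at comparable scales: strong separation
gives `δ α̲ ^ (n + 1) ≤ t` for `n = n(𝚒, t)`, while (H2) puts a generation-`n` sibling cylinder on
the vertical line through `π(𝚒)`, within `α₂(𝚒|_{n-1})` of it, so `t < α₂(𝚒|_{n-1})`. The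
abscissas of the horizontal endings of the rectangles `Q_{𝚒|_t 𝚓}`, `|𝚓| = K`, are the image of a
fixed finite set under an affine map of ratio `α₁(𝚒|_t)`, hence distinct ones are at least
`α₁(𝚒|_t) ε_K` apart. Since `α₂ / α₁` decays geometrically along words, `2 t < α₁(𝚒|_t) ε_K`
for small `t`, so a ball of radius `t` meets at most one such line.
-/

def prodA1 (c : HorizontalCarpet) (l : List (Fin c.N)) : ℝ := (l.map c.a1).prod

lemma dist_sq_eq_coord (x y : E2) : dist x y ^ 2 = (x 0 - y 0) ^ 2 + (x 1 - y 1) ^ 2 := by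
  rw [EuclideanSpace.dist_eq, Real.sq_sqrt (by positivity), Fin.sum_univ_two, Real.dist_eq,
    Real.dist_eq, sq_abs, sq_abs]

lemma abs_sub_fst_le_dist (x y : E2) : |x 0 - y 0| ≤ dist x y :=
  abs_le_of_sq_le_sq (by nlinarith [dist_sq_eq_coord x y, sq_nonneg (x 1 - y 1)]) dist_nonneg

lemma Set.Finite.exists_pos_le_dist {α : Type*} [MetricSpace α] {s : Set α} (hs : s.Finite) :
    ∃ ε > 0, ∀ x ∈ s, ∀ y ∈ s, x ≠ y → ε ≤ dist x y := by
  by_cases h : s.Nontrivial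
  · exact ⟨s.infsep, hs.infsep_pos_iff_nontrivial.2 h,
      fun x hx y hy hxy => infsep_le_dist_of_mem hx hy hxy⟩
  · exact ⟨1, one_pos, fun x hx y hy hxy => absurd ⟨x, hx, y, hy, hxy⟩ h⟩

namespace HorizontalCarpet

variable (c : HorizontalCarpet)

instance : Nontrivial (Fin c.N) := Fin.nontrivial_iff_two_le.2 c.hN

lemma a2_pos (i : Fin c.N) : 0 < c.a2 i := (c.hH1 i).1

lemma a2_lt_a1 (i : Fin c.N) : c.a2 i < c.a1 i := (c.hH1 i).2.1

lemma a1_pos (i : Fin c.N) : 0 < c.a1 i := (c.a2_pos i).trans (c.a2_lt_a1 i)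

lemma a1_lt_one (i : Fin c.N) : c.a1 i < 1 := (c.hH1 i).2.2

lemma φ_apply_fst (i : Fin c.N) (x : E2) : c.φ i x 0 = c.a1 i * x 0 + c.b1 i := by
  simp [c.hφ]

lemma φ_apply_snd (i : Fin c.N) (x : E2) : c.φ i x 1 = c.a2 i * x 1 + c.b2 i := by
  simp [c.hφ]

@[simp] lemma wordMap_nil (x : E2) : wordMap c [] x = x := rfl

@[simp] lemma wordMap_cons (i : Fin c.N) (w : List (Fin c.N)) (x : E2) :
    wordMap c (i :: w) x = c.φ i (wordMap c w x) := rfl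

lemma wordMap_append (u v : List (Fin c.N)) (x : E2) :
    wordMap c (u ++ v) x = wordMap c u (wordMap c v x) := by
  induction u with
  | nil => rfl
  | cons i u ih => simp [ih]

@[simp] lemma prodA1_nil : prodA1 c [] = 1 := rfl

@[simp] lemma prodA2_nil : prodA2 c [] = 1 := rfl

@[simp] lemma prodA1_cons (i : Fin c.N) (w : List (Fin c.N)) :
    prodA1 c (i :: w) = c.a1 i * prodA1 c w := List.prod_cons

@[simp] lemma prodA2_cons (i : Fin c.N) (w : List (Fin c.N)) :
    prodA2 c (i :: w) = c.a2 i * prodA2 c w := List.prod_cons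

lemma prodA1_append_singleton (w : List (Fin c.N)) (j : Fin c.N) :
    prodA1 c (w ++ [j]) = prodA1 c w * c.a1 j := by
  simp [prodA1]

lemma prodA1_pos (w : List (Fin c.N)) : 0 < prodA1 c w :=
  List.prod_pos fun _ ha => by
    obtain ⟨i, -, rfl⟩ := List.mem_map.1 ha; exact c.a1_pos i

lemma prodA2_pos (w : List (Fin c.N)) : 0 < prodA2 c w :=
  List.prod_pos fun _ ha => by
    obtain ⟨i, -, rfl⟩ := List.mem_map.1 ha; exact c.a2_pos i

lemma prodA2_le_prodA1 (w : List (Fin c.N)) : prodA2 c w ≤ prodA1 c w :=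
  List.prod_map_le_prod_map₀ _ _ (fun i _ => (c.a2_pos i).le) (fun i _ => (c.a2_lt_a1 i).le)

lemma wordMap_apply_fst (w : List (Fin c.N)) (x : E2) :
    wordMap c w x 0 = prodA1 c w * x 0 + wordMap c w 0 0 := by
  induction w generalizing x with
  | nil => simp
  | cons i w ih => simp only [wordMap_cons, φ_apply_fst, prodA1_cons, ih x]; ring

lemma wordMap_apply_snd (w : List (Fin c.N)) (x : E2) :
    wordMap c w x 1 = prodA2 c w * x 1 + wordMap c w 0 1 := by
  induction w generalizing x with
  | nil => simp
  | cons i w ih => simp only [wordMap_cons, φ_apply_snd, prodA2_cons, ih x]; ring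

lemma dist_wordMap_sq (w : List (Fin c.N)) (x y : E2) :
    dist (wordMap c w x) (wordMap c w y) ^ 2
      = (prodA1 c w * (x 0 - y 0)) ^ 2 + (prodA2 c w * (x 1 - y 1)) ^ 2 := by
  rw [dist_sq_eq_coord, wordMap_apply_fst c w x, wordMap_apply_fst c w y,
    wordMap_apply_snd c w x, wordMap_apply_snd c w y]
  ring

lemma dist_wordMap_le (w : List (Fin c.N)) (x y : E2) :
    dist (wordMap c w x) (wordMap c w y) ≤ prodA1 c w * dist x y := by
  have h := c.prodA2_le_prodA1 w
  have h₂ := (c.prodA2_pos w).le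
  refine (pow_le_pow_iff_left₀ dist_nonneg (by positivity [c.prodA1_pos w]) two_ne_zero).1 ?_
  rw [dist_wordMap_sq, mul_pow _ (dist x y), dist_sq_eq_coord]
  nlinarith [mul_le_mul h h h₂ (h₂.trans h), sq_nonneg (x 1 - y 1)]

lemma le_dist_wordMap (w : List (Fin c.N)) (x y : E2) :
    prodA2 c w * dist x y ≤ dist (wordMap c w x) (wordMap c w y) := by
  have h := c.prodA2_le_prodA1 w
  have h₂ := (c.prodA2_pos w).le
  refine (pow_le_pow_iff_left₀ (by positivity) dist_nonneg two_ne_zero).1 ?_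
  rw [dist_wordMap_sq, mul_pow _ (dist x y), dist_sq_eq_coord]
  nlinarith [mul_le_mul h h h₂ (h₂.trans h), sq_nonneg (x 0 - y 0)]

lemma dist_wordMap_of_fst_eq (w : List (Fin c.N)) {x y : E2} (h : x 0 = y 0) :
    dist (wordMap c w x) (wordMap c w y) = prodA2 c w * dist x y := by
  refine (pow_left_inj₀ dist_nonneg (by positivity [c.prodA2_pos w]) two_ne_zero).1 ?_
  rw [dist_wordMap_sq, mul_pow _ (dist x y), dist_sq_eq_coord, h]
  ring

lemma continuous_wordMap (w : List (Fin c.N)) : Continuous (wordMap c w) :=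
  (LipschitzWith.of_dist_le_mul (K := ⟨prodA1 c w, (c.prodA1_pos w).le⟩)
    (c.dist_wordMap_le w)).continuous

lemma le_alphaBar (i : Fin c.N) : c.a1 i ≤ alphaBar c :=
  le_csSup (finite_range c.a1).bddAbove ⟨i, rfl⟩

lemma alphaBar_lt_one : alphaBar c < 1 := by
  obtain ⟨i, hi⟩ := (range_nonempty c.a1).csSup_mem (finite_range c.a1)
  rw [alphaBar, ← hi]
  exact c.a1_lt_one i

lemma alphaLow_le (i : Fin c.N) : alphaLow c ≤ c.a2 i :=
  csInf_le (finite_range c.a2).bddBelow ⟨i, rfl⟩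

lemma alphaLow_pos : 0 < alphaLow c := by
  obtain ⟨i, hi⟩ := (range_nonempty c.a2).csInf_mem (finite_range c.a2)
  rw [alphaLow, ← hi]
  exact c.a2_pos i

lemma alphaLow_lt_one : alphaLow c < 1 := by
  obtain ⟨i⟩ := (inferInstance : Nonempty (Fin c.N))
  exact (c.alphaLow_le i).trans_lt ((c.a2_lt_a1 i).trans (c.a1_lt_one i))

def maxRatio : ℝ := sSup (range fun i => c.a2 i / c.a1 i)

lemma a2_le_maxRatio_mul (i : Fin c.N) : c.a2 i ≤ maxRatio c * c.a1 i :=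
  (div_le_iff₀ (c.a1_pos i)).1 (le_csSup (finite_range _).bddAbove ⟨i, rfl⟩)

lemma maxRatio_pos : 0 < maxRatio c := by
  obtain ⟨i⟩ := (inferInstance : Nonempty (Fin c.N))
  nlinarith [c.a2_pos i, c.a1_pos i, c.a2_le_maxRatio_mul i]

lemma maxRatio_lt_one : maxRatio c < 1 := by
  obtain ⟨i, hi⟩ := (range_nonempty _).csSup_mem (finite_range fun i => c.a2 i / c.a1 i)
  rw [maxRatio, ← hi]
  exact (div_lt_one (c.a1_pos i)).2 (c.a2_lt_a1 i)

lemma prodA1_le_alphaBar_pow (w : List (Fin c.N)) : prodA1 c w ≤ alphaBar c ^ w.length := by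
  simpa [prodA1, List.map_const'] using List.prod_map_le_prod_map₀ c.a1 (fun _ => alphaBar c)
    (fun i _ => (c.a1_pos i).le) (fun i _ => c.le_alphaBar i)

lemma prodA2_le_maxRatio_pow_mul (w : List (Fin c.N)) :
    prodA2 c w ≤ maxRatio c ^ w.length * prodA1 c w := by
  simpa [prodA1, prodA2, List.prod_map_mul, List.map_const'] using List.prod_map_le_prod_map₀ c.a2
    (fun i => maxRatio c * c.a1 i) (fun i _ => (c.a2_pos i).le) (fun i _ => c.a2_le_maxRatio_mul i)

lemma φ_mem {i : Fin c.N} {x : E2} (hx : x ∈ c.E) : c.φ i x ∈ c.E := by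
  rw [c.hinv]
  exact mem_iUnion_of_mem i (mem_image_of_mem _ hx)

lemma wordMap_mem (w : List (Fin c.N)) {x : E2} (hx : x ∈ c.E) : wordMap c w x ∈ c.E := by
  induction w with
  | nil => exact hx
  | cons i w ih => exact c.φ_mem ih

lemma dist_le_one_of_mem_convexHull {x y : E2} (hx : x ∈ convexHull ℝ c.E)
    (hy : y ∈ convexHull ℝ c.E) : dist x y ≤ 1 := by
  have h := dist_le_diam_of_mem (isBounded_convexHull.2 c.hcomp.isBounded) hx hy
  rwa [convexHull_diam, c.hdiam] at h

lemma dist_le_one {x y : E2} (hx : x ∈ c.E) (hy : y ∈ c.E) : dist x y ≤ 1 :=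
  c.dist_le_one_of_mem_convexHull (subset_convexHull ℝ c.E hx) (subset_convexHull ℝ c.E hy)

/-- Iterate (H2), zooming into a first-generation piece still met by the vertical line. -/
lemma exists_mem_abs_fst_sub_le (n : ℕ) {y : E2} (hy : y ∈ convexHull ℝ c.E) :
    ∃ e ∈ c.E, |e 0 - y 0| ≤ alphaBar c ^ n := by
  induction n generalizing y with
  | zero =>
    obtain ⟨e, he⟩ := c.hne
    have hey := c.dist_le_one_of_mem_convexHull (subset_convexHull ℝ c.E he) hy
    exact ⟨e, he, by simpa using (abs_sub_fst_le_dist e y).trans hey⟩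
  | succ n ih =>
    obtain ⟨i, -, -, ⟨-, hz, y', hy', rfl⟩, -⟩ := c.hH2 (y 0) ⟨y, rfl, hy⟩
    obtain ⟨e, he, hey⟩ := ih hy'
    refine ⟨c.φ i e, c.φ_mem he, ?_⟩
    rw [← show c.φ i y' 0 = y 0 from hz, φ_apply_fst, φ_apply_fst,
      show c.a1 i * e 0 + c.b1 i - (c.a1 i * y' 0 + c.b1 i) = c.a1 i * (e 0 - y' 0) by ring,
      abs_mul, abs_of_pos (c.a1_pos i), pow_succ']
    exact mul_le_mul (c.le_alphaBar i) hey (abs_nonneg _) ((c.a1_pos i).le.trans (c.le_alphaBar i))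

lemma exists_mem_fst_eq {y : E2} (hy : y ∈ convexHull ℝ c.E) : ∃ e ∈ c.E, e 0 = y 0 := by
  have hclosed : IsClosed ((fun x : E2 => x 0) '' c.E) :=
    (c.hcomp.image (EuclideanSpace.proj (0 : Fin 2)).continuous).isClosed
  suffices y 0 ∈ closure ((fun x : E2 => x 0) '' c.E) by
    simpa [hclosed.closure_eq] using this
  refine Metric.mem_closure_iff.2 fun ε hε => ?_
  obtain ⟨n, hn⟩ := exists_pow_lt_of_lt_one hε c.alphaBar_lt_one
  obtain ⟨e, he, hey⟩ := c.exists_mem_abs_fst_sub_le n hy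
  exact ⟨e 0, mem_image_of_mem _ he, by rw [Real.dist_eq, abs_sub_comm]; exact hey.trans_lt hn⟩

lemma exists_ne_φ_fst_eq (m : Fin c.N) {y : E2} (hy : y ∈ c.E) :
    ∃ j ≠ m, ∃ x ∈ c.E, c.φ j x 0 = y 0 := by
  have hline : ∀ j, (vline (y 0) ∩ c.φ j '' convexHull ℝ c.E).Nonempty →
      ∃ x ∈ c.E, c.φ j x 0 = y 0 := by
    rintro j ⟨-, hz, y', hy', rfl⟩
    obtain ⟨x, hx, hxy⟩ := c.exists_mem_fst_eq hy'
    exact ⟨x, hx, by rw [φ_apply_fst, hxy, ← φ_apply_fst]; exact hz⟩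
  obtain ⟨j, j', hjj', hj, hj'⟩ := c.hH2 (y 0) ⟨y, rfl, subset_convexHull ℝ c.E hy⟩
  by_cases hjm : j = m
  · exact ⟨j', hjm ▸ hjj'.symm, hline j' hj'⟩
  · exact ⟨j, hjm, hline j hj⟩

lemma sscGap_le_dist {i j : Fin c.N} (hij : i ≠ j) {x y : E2} (hx : x ∈ c.φ i '' c.E)
    (hy : y ∈ c.φ j '' c.E) : sscGap c ≤ dist x y :=
  csInf_le ⟨0, by rintro _ ⟨-, -, -, x, -, y, -, rfl⟩; exact dist_nonneg⟩
    ⟨i, j, hij, x, hx, y, hy, rfl⟩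

lemma sscGap_pos : 0 < sscGap c := by
  let S : Set (E2 × E2) := ⋃ i, ⋃ j, ⋃ (_ : i ≠ j), (c.φ i '' c.E) ×ˢ (c.φ j '' c.E)
  have hcompact : ∀ i, IsCompact (c.φ i '' c.E) := fun i =>
    c.hcomp.image (c.continuous_wordMap [i])
  have hS : IsCompact S := isCompact_iUnion fun i => isCompact_iUnion fun j =>
    isCompact_iUnion fun _ => (hcompact i).prod (hcompact j)
  have hmemS : ∀ {k l : Fin c.N} {u v : E2}, k ≠ l → u ∈ c.φ k '' c.E → v ∈ c.φ l '' c.E →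
      (u, v) ∈ S := fun hkl hu hv => by
    simp only [S, mem_iUnion, mem_prod]
    exact ⟨_, _, hkl, hu, hv⟩
  obtain ⟨i, j, hij⟩ := exists_pair_ne (Fin c.N)
  obtain ⟨e, he⟩ := c.hne
  have hcont : ContinuousOn (fun q : E2 × E2 => dist q.1 q.2) S := continuous_dist.continuousOn
  obtain ⟨⟨x, y⟩, hxy, hmin⟩ := hS.exists_isMinOn
    ⟨_, hmemS hij (mem_image_of_mem _ he) (mem_image_of_mem _ he)⟩ hcont
  simp only [S, mem_iUnion, mem_prod] at hxy
  obtain ⟨i', j', hij', hx, hy⟩ := hxy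
  have hpos : 0 < dist x y := dist_pos.2 fun h => (c.hssc i' j' hij').ne_of_mem hx (h ▸ hy) rfl
  have hne : {d : ℝ | ∃ i j : Fin c.N, i ≠ j ∧
      ∃ x ∈ c.φ i '' c.E, ∃ y ∈ c.φ j '' c.E, d = dist x y}.Nonempty :=
    ⟨_, i, j, hij, _, mem_image_of_mem _ he, _, mem_image_of_mem _ he, rfl⟩
  refine hpos.trans_le (le_csInf hne ?_)
  rintro d ⟨k, l, hkl, u, hu, v, hv, hd⟩
  rw [hd]
  exact isMinOn_iff.1 hmin (u, v) (hmemS hkl hu hv)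

lemma sscGap_mul_pow_le_dist {u v : List (Fin c.N)} (hlen : u.length = v.length) (huv : u ≠ v)
    {x y : E2} (hx : x ∈ wordMap c u '' c.E) (hy : y ∈ wordMap c v '' c.E) :
    sscGap c * alphaLow c ^ u.length ≤ dist x y := by
  induction u generalizing v x y with
  | nil => exact absurd (List.length_eq_zero_iff.1 hlen.symm).symm huv
  | cons i u ih =>
    obtain _ | ⟨j, v⟩ := v
    · simp at hlen
    obtain ⟨x, hx, rfl⟩ := hx
    obtain ⟨y, hy, rfl⟩ := hy
    by_cases hij : i = j
    · subst hij
      have huv' : u ≠ v := fun h => huv (h ▸ rfl)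
      have hind := ih (by simpa using hlen) huv' (mem_image_of_mem _ hx) (mem_image_of_mem _ hy)
      calc sscGap c * alphaLow c ^ (u.length + 1)
          = alphaLow c * (sscGap c * alphaLow c ^ u.length) := by ring
        _ ≤ c.a2 i * dist (wordMap c u x) (wordMap c v y) :=
          mul_le_mul (c.alphaLow_le i) hind (by positivity [c.sscGap_pos, c.alphaLow_pos])
            (c.a2_pos i).le
        _ ≤ _ := by simpa using c.le_dist_wordMap [i] (wordMap c u x) (wordMap c v y)
    · calc sscGap c * alphaLow c ^ (u.length + 1) ≤ sscGap c * 1 :=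
            mul_le_mul_of_nonneg_left (pow_le_one₀ c.alphaLow_pos.le c.alphaLow_lt_one.le)
              c.sscGap_pos.le
        _ ≤ _ := (mul_one (sscGap c)).symm ▸ c.sscGap_le_dist hij
            (mem_image_of_mem _ (c.wordMap_mem u hx)) (mem_image_of_mem _ (c.wordMap_mem v hy))

@[simp] lemma wordPre_length (i : ℕ → Fin c.N) (n : ℕ) : (wordPre c i n).length = n := by
  simp [wordPre]

lemma wordPre_succ (i : ℕ → Fin c.N) (n : ℕ) : wordPre c i (n + 1) = wordPre c i n ++ [i n] := by
  simp [wordPre, List.range_succ]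

lemma append_ne_wordPre_succ (i : ℕ → Fin c.N) {n : ℕ} {j : Fin c.N} (hj : j ≠ i n) :
    wordPre c i n ++ [j] ≠ wordPre c i (n + 1) := by
  simpa [wordPre_succ] using hj

section nSep

variable {c} {i : ℕ → Fin c.N} {p : E2} {t : ℝ}

lemma bddAbove_setOf_nSep (ht : 0 < t) (hp : ∀ n, p ∈ wordMap c (wordPre c i n) '' c.E) :
    BddAbove {n : ℕ | ∀ l : List (Fin c.N), l.length = n → l ≠ wordPre c i n →
      wordMap c l '' c.E ∩ closedBall p t = ∅} := by
  obtain ⟨M, hM⟩ := exists_pow_lt_of_lt_one ht c.alphaBar_lt_one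
  refine ⟨M, fun n hn => ?_⟩
  by_contra! hMn
  obtain ⟨k, rfl⟩ : ∃ k, n = k + 1 := ⟨n - 1, by omega⟩
  obtain ⟨j, hj⟩ := exists_ne (i k)
  obtain ⟨e, he, rfl⟩ := hp k
  refine (hn _ (by simp) (c.append_ne_wordPre_succ i hj)).subset
    ⟨mem_image_of_mem _ he, ?_⟩
  rw [mem_closedBall, wordMap_append]
  calc dist (wordMap c (wordPre c i k) (c.φ j e)) (wordMap c (wordPre c i k) e)
      ≤ prodA1 c (wordPre c i k) * 1 :=
        (c.dist_wordMap_le _ _ _).trans (mul_le_mul_of_nonneg_left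
          (c.dist_le_one (c.φ_mem he) he) (c.prodA1_pos _).le)
    _ ≤ alphaBar c ^ M := by
        simpa using (c.prodA1_le_alphaBar_pow _).trans
          (pow_le_pow_of_le_one ((c.a1_pos j).le.trans (c.le_alphaBar j)) c.alphaBar_lt_one.le
            (by rw [wordPre_length]; omega))
    _ ≤ t := hM.le

lemma nSep_spec (ht : 0 < t) (hp : ∀ n, p ∈ wordMap c (wordPre c i n) '' c.E)
    (l : List (Fin c.N)) (hl : l.length = nSep c i p t) (hne : l ≠ wordPre c i (nSep c i p t)) :
    wordMap c l '' c.E ∩ closedBall p t = ∅ :=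
  Nat.sSup_mem ⟨0, fun _ hl hne => (hne (List.length_eq_zero_iff.1 hl)).elim⟩
    (bddAbove_setOf_nSep ht hp) l hl hne

lemma exists_ne_wordPre_nSep_succ (ht : 0 < t) (hp : ∀ n, p ∈ wordMap c (wordPre c i n) '' c.E) :
    ∃ l : List (Fin c.N), l.length = nSep c i p t + 1 ∧ l ≠ wordPre c i (nSep c i p t + 1) ∧
      (wordMap c l '' c.E ∩ closedBall p t).Nonempty := by
  by_contra! h
  exact (Nat.lt_succ_self _).not_ge (le_csSup (bddAbove_setOf_nSep ht hp) h)

lemma sscGap_mul_pow_nSep_succ_le (ht : 0 < t) (hp : ∀ n, p ∈ wordMap c (wordPre c i n) '' c.E) :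
    sscGap c * alphaLow c ^ (nSep c i p t + 1) ≤ t := by
  obtain ⟨l, hl, hne, q, hq, hqp⟩ := exists_ne_wordPre_nSep_succ ht hp
  have h := c.sscGap_mul_pow_le_dist (by rw [hl, wordPre_length]) hne.symm (hp _) hq
  rw [wordPre_length] at h
  exact h.trans ((dist_comm p q).trans_le hqp)

/-- The ball misses the sibling cylinder `𝚒|_k j` cut out by the vertical line through `p`,
which lies within `α₂(𝚒|_k)` of `p`. -/
lemma lt_prodA2_of_nSep_eq_succ (ht : 0 < t) (hp : ∀ n, p ∈ wordMap c (wordPre c i n) '' c.E)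
    {k : ℕ} (hk : nSep c i p t = k + 1) : t < prodA2 c (wordPre c i k) := by
  obtain ⟨e, he, rfl⟩ := hp k
  obtain ⟨j, hj, x, hx, hxe⟩ := c.exists_ne_φ_fst_eq (i k) he
  have hempty := nSep_spec ht hp (wordPre c i k ++ [j]) (by simp [hk])
    (hk ▸ c.append_ne_wordPre_succ i hj)
  have hfar : wordMap c (wordPre c i k) (c.φ j x) ∉ closedBall (wordMap c (wordPre c i k) e) t :=
    fun hball => hempty.subset ⟨⟨x, hx, by rw [wordMap_append]; rfl⟩, hball⟩
  rw [mem_closedBall, not_le, c.dist_wordMap_of_fst_eq _ hxe] at hfar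
  exact hfar.trans_le (mul_le_of_le_one_right (c.prodA2_pos _).le (c.dist_le_one (c.φ_mem hx) he))

end nSep

-- The `x`-coordinates of the horizontal endings of the rectangles `Q_𝚓`, `|𝚓| = K`.
def endingAbscissas (K : ℕ) : Set ℝ :=
  {s | ∃ l : List (Fin c.N), l.length = K ∧
    ∃ h ∈ ({hLeft c, hRight c} : Set ℝ), s = prodA1 c l * h + wordMap c l 0 0}

lemma finite_endingAbscissas (K : ℕ) : (endingAbscissas c K).Finite :=
  (((List.finite_length_eq (Fin c.N) K).prod (toFinite {hLeft c, hRight c})).image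
    fun q => prodA1 c q.1 * q.2 + wordMap c q.1 0 0).subset
      fun _ ⟨l, hl, h, hh, hs⟩ => ⟨(l, h), ⟨hl, hh⟩, hs.symm⟩

lemma vBot_le_vTop : vBot c ≤ vTop c :=
  Real.sInf_le_sSup _ (c.hcomp.image (EuclideanSpace.proj (1 : Fin 2)).continuous).bddBelow
    (c.hcomp.image (EuclideanSpace.proj (1 : Fin 2)).continuous).bddAbove

lemma eq_of_image_ending_subset_vline {w : List (Fin c.N)} {h a : ℝ}
    (hsub : wordMap c w '' {x : E2 | x 0 = h ∧ x 1 ∈ Icc (vBot c) (vTop c)} ⊆ vline a) :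
    a = prodA1 c w * h + wordMap c w 0 0 := by
  have hcorner : (!₂[h, vBot c] : E2) ∈ {x : E2 | x 0 = h ∧ x 1 ∈ Icc (vBot c) (vTop c)} :=
    ⟨by simp, by simpa using c.vBot_le_vTop⟩
  rw [← show wordMap c w !₂[h, vBot c] 0 = a from hsub (mem_image_of_mem _ hcorner),
    wordMap_apply_fst]
  simp

lemma exists_abscissa_of_endingLine {i : ℕ → Fin c.N} {p : E2} {t : ℝ} {K : ℕ} {a : ℝ}
    (ha : EndingLine c i p t K a) :
    |a - p 0| ≤ t ∧ ∃ s ∈ endingAbscissas c K, a =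
      prodA1 c (wordPre c i (nSep c i p t)) * s + wordMap c (wordPre c i (nSep c i p t)) 0 0 := by
  obtain ⟨⟨q, hqa, hqp⟩, l, hl, hsub⟩ := ha
  refine ⟨(show q 0 = a from hqa) ▸ (abs_sub_fst_le_dist q p).trans hqp, ?_⟩
  set w := wordPre c i (nSep c i p t)
  have hdecomp : ∀ h, prodA1 c (w ++ l) * h + wordMap c (w ++ l) 0 0
      = prodA1 c w * (prodA1 c l * h + wordMap c l 0 0) + wordMap c w 0 0 := fun h => by
    rw [funext (wordMap_append c w l), wordMap_apply_fst c w, prodA1, List.map_append,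
      List.prod_append, ← prodA1, ← prodA1]
    ring
  rcases hsub with hsub | hsub
  · exact ⟨_, ⟨l, hl, hLeft c, by simp, rfl⟩,
      (c.eq_of_image_ending_subset_vline hsub).trans (hdecomp _)⟩
  · exact ⟨_, ⟨l, hl, hRight c, by simp, rfl⟩,
      (c.eq_of_image_ending_subset_vline hsub).trans (hdecomp _)⟩

lemma eq_of_endingLine {i : ℕ → Fin c.N} {p : E2} {t ε : ℝ} {K : ℕ} {a a' : ℝ}
    (hε : ∀ s ∈ endingAbscissas c K, ∀ s' ∈ endingAbscissas c K, s ≠ s' → ε ≤ dist s s')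
    (ht : 2 * t < prodA1 c (wordPre c i (nSep c i p t)) * ε)
    (ha : EndingLine c i p t K a) (ha' : EndingLine c i p t K a') : a = a' := by
  obtain ⟨hap, s, hs, rfl⟩ := c.exists_abscissa_of_endingLine ha
  obtain ⟨hap', s', hs', rfl⟩ := c.exists_abscissa_of_endingLine ha'
  set A := prodA1 c (wordPre c i (nSep c i p t))
  set B := wordMap c (wordPre c i (nSep c i p t)) 0 0
  have hA : 0 < A := c.prodA1_pos _
  by_contra hne
  have hgap := hε s hs s' hs' fun h => hne (h ▸ rfl)
  have hwidth : A * dist s s' ≤ 2 * t :=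
    calc A * dist s s' = |(A * s + B - p 0) - (A * s' + B - p 0)| := by
          rw [Real.dist_eq, ← abs_of_pos hA, ← abs_mul, abs_of_pos hA]
          ring_nf
      _ ≤ |A * s + B - p 0| + |A * s' + B - p 0| := abs_sub _ _
      _ ≤ 2 * t := by linarith
  nlinarith

lemma two_mul_lt_prodA1_append_mul {w : List (Fin c.N)} (j : Fin c.N) {t ε : ℝ} {n₀ : ℕ}
    (hε : 0 < ε) (hn₀ : maxRatio c ^ n₀ < alphaLow c * ε / 2) (hw : n₀ ≤ w.length)
    (ht : t < prodA2 c w) : 2 * t < prodA1 c (w ++ [j]) * ε := by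
  have hA := c.prodA1_pos w
  calc 2 * t < 2 * prodA2 c w := by linarith
    _ ≤ 2 * (maxRatio c ^ n₀ * prodA1 c w) := by
        gcongr
        exact (c.prodA2_le_maxRatio_pow_mul w).trans (mul_le_mul_of_nonneg_right
          (pow_le_pow_of_le_one c.maxRatio_pos.le c.maxRatio_lt_one.le hw) hA.le)
    _ < alphaLow c * ε * prodA1 c w := by nlinarith
    _ ≤ c.a1 j * ε * prodA1 c w := by
        gcongr
        exact (c.alphaLow_le j).trans (c.a2_lt_a1 j).le
    _ = prodA1 c (w ++ [j]) * ε := by rw [prodA1_append_singleton]; ring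

end HorizontalCarpet

/-- Lemma 5.3 of the paper: for every `K` there is `t_K > 0` such that for `0 < t < t_K`
the ball `B(π(𝚒),t)` meets at most one vertical line containing a horizontal ending of a
rectangle `Q_{𝚒|_t 𝚓}` with `|𝚓| = K`. -/
theorem statement10 (c : HorizontalCarpet) (K : ℕ) :
    ∃ tK : ℝ, 0 < tK ∧ ∀ t : ℝ, 0 < t → t < tK →
      ∀ (i : ℕ → Fin c.N) (p : E2), (∀ n : ℕ, p ∈ wordMap c (wordPre c i n) '' c.E) →
      ∀ a a' : ℝ, EndingLine c i p t K a → EndingLine c i p t K a' → a = a' := by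
  have hδ := c.sscGap_pos
  have hα := c.alphaLow_pos
  obtain ⟨ε, hε, hsep⟩ := (c.finite_endingAbscissas K).exists_pos_le_dist
  obtain ⟨n₀, hn₀⟩ := exists_pow_lt_of_lt_one
    (show 0 < alphaLow c * ε / 2 by positivity) c.maxRatio_lt_one
  refine ⟨sscGap c * alphaLow c ^ (n₀ + 1), by positivity,
    fun t ht htK i p hp a a' ha ha' => c.eq_of_endingLine hsep ?_ ha ha'⟩
  obtain ⟨k, hk, hn₀k⟩ : ∃ k, nSep c i p t = k + 1 ∧ n₀ ≤ k := by
    have h := (c.sscGap_mul_pow_nSep_succ_le ht hp).trans_lt htK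
    rw [mul_lt_mul_iff_right₀ hδ, pow_lt_pow_iff_right_of_lt_one₀ hα c.alphaLow_lt_one] at h
    exact ⟨nSep c i p t - 1, by omega, by omega⟩
  rw [hk, c.wordPre_succ]
  exact c.two_mul_lt_prodA1_append_mul (i k) hε hn₀ (by simpa using hn₀k)
    (c.lt_prodA2_of_nSep_eq_succ ht hp hk)
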